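/- arXiv:2602.15221 — 3 statements merged into one kernel-verified Lean document; each statement's English description precedes it below -/
import Mathlib

section
/- For all nonempty types X and Y, the double star DS(X,Y) has an irreducible distinguishing vertex colouring, i.e., there exist a type C and a distinguishing vertex colouring c : V(DS(X,Y)) → C such that no nontrivial merge of two colours of c is distinguishing. -/
universe u v w

/-- A vertex colouring `c` is distinguishing if the identity is the only
automorphism of `G` preserving `c`. -/
def VertexDistinguishing {V : Type u} {C : Type w} (G : SimpleGraph V) (c : V → C) : Prop :=
  ∀ φ : G ≃g G, (∀ x : V, c (φ x) = c x) → ∀ x : V, φ x = x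

open Classical in
/-- The map merging colour `b` into colour `a`. -/
noncomputable def mergeMap {C : Type w} (a b : C) : C → C :=
  fun x => if x = b then a else x

/-- The base relation of the double star `DS(X, Y)`: the centre `x'` (encoded as
`Sum.inr (Sum.inr true)`) is joined to the centre `y'` (encoded as
`Sum.inr (Sum.inr false)`) and to every vertex of `X`, and `y'` is joined to
every vertex of `Y`. -/
def DSRel (X : Type u) (Y : Type v) : (X ⊕ Y ⊕ Bool) → (X ⊕ Y ⊕ Bool) → Prop
  | Sum.inl _, Sum.inr (Sum.inr true) => True
  | Sum.inr (Sum.inl _), Sum.inr (Sum.inr false) => True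
  | Sum.inr (Sum.inr true), Sum.inr (Sum.inr false) => True
  | _, _ => False

/-- The double star `DS(X, Y)`. -/
def DS (X : Type u) (Y : Type v) : SimpleGraph (X ⊕ Y ⊕ Bool) :=
  SimpleGraph.fromRel (DSRel X Y)

section helpers
variable {X : Type u} {Y : Type v}

/-- centre x' -/
abbrev xc (X : Type u) (Y : Type v) : X ⊕ Y ⊕ Bool := Sum.inr (Sum.inr true)
/-- centre y' -/
abbrev yc (X : Type u) (Y : Type v) : X ⊕ Y ⊕ Bool := Sum.inr (Sum.inr false)

lemma adj_inl (x : X) (w : X ⊕ Y ⊕ Bool) :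
    (DS X Y).Adj (Sum.inl x) w ↔ w = xc X Y := by
  rcases w with x2 | y2 | (_|_) <;> simp [DS, SimpleGraph.fromRel_adj, DSRel]

lemma adj_inry (y : Y) (w : X ⊕ Y ⊕ Bool) :
    (DS X Y).Adj (Sum.inr (Sum.inl y)) w ↔ w = yc X Y := by
  rcases w with x2 | y2 | (_|_) <;> simp [DS, SimpleGraph.fromRel_adj, DSRel]

lemma adj_xc (w : X ⊕ Y ⊕ Bool) :
    (DS X Y).Adj (xc X Y) w ↔ (w = yc X Y ∨ ∃ x, w = Sum.inl x) := by
  rcases w with x2 | y2 | (_|_) <;> simp [DS, SimpleGraph.fromRel_adj, DSRel]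

lemma adj_yc (w : X ⊕ Y ⊕ Bool) :
    (DS X Y).Adj (yc X Y) w ↔ (w = xc X Y ∨ ∃ y, w = Sum.inr (Sum.inl y)) := by
  rcases w with x2 | y2 | (_|_) <;> simp [DS, SimpleGraph.fromRel_adj, DSRel]

/-- Vertices with two distinct neighbours are centres. -/
lemma center_of_two {v : X ⊕ Y ⊕ Bool} {w1 w2 : X ⊕ Y ⊕ Bool} (hne : w1 ≠ w2)
    (h1 : (DS X Y).Adj v w1) (h2 : (DS X Y).Adj v w2) :
    v = xc X Y ∨ v = yc X Y := by
  rcases v with x | y | (_|_)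
  · rw [adj_inl] at h1 h2; exact absurd (h1.trans h2.symm) hne
  · rw [adj_inry] at h1 h2; exact absurd (h1.trans h2.symm) hne
  · exact Or.inr rfl
  · exact Or.inl rfl

end helpers

/-- The swap of two (non-adjacent) twin vertices is an automorphism. -/
def twinSwap {V : Type u} [DecidableEq V] (G : SimpleGraph V) (s t : V)
    (h : ∀ v, G.Adj s v ↔ G.Adj t v) : G ≃g G := by
  refine ⟨Equiv.swap s t, ?_⟩
  have key : ∀ u v, G.Adj u v → G.Adj (Equiv.swap s t u) (Equiv.swap s t v) := by
    intro u v huv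
    rw [Equiv.swap_apply_def, Equiv.swap_apply_def]
    split_ifs
    all_goals subst_vars
    all_goals
      first
      | exact huv
      | exact (h _).mp huv
      | exact (h _).mpr huv
      | exact ((h _).mp huv.symm).symm
      | exact ((h _).mpr huv.symm).symm
      | exact absurd huv G.irrefl
      | exact absurd ((h _).mp huv) G.irrefl
      | exact absurd ((h _).mpr huv) G.irrefl
      | exact absurd ((h _).mp huv.symm) G.irrefl
      | exact absurd ((h _).mpr huv.symm) G.irrefl
  intro u v
  constructor
  · intro h'
    have := key _ _ h'
    simpa using this
  · exact key u v

@[simp] lemma twinSwap_apply {V : Type u} [DecidableEq V] (G : SimpleGraph V) (s t : V)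
    (h : ∀ v, G.Adj s v ↔ G.Adj t v) (v : V) :
    twinSwap G s t h v = Equiv.swap s t v := rfl

/-- Transport of distinguishing colourings along an isomorphism. -/
lemma dist_transport {V : Type u} {W : Type v} {C : Type w}
    {G : SimpleGraph V} {H : SimpleGraph W} (e : G ≃g H) (c : W → C)
    (hd : VertexDistinguishing H c) : VertexDistinguishing G (c ∘ e) := by
  intro φ hφ x
  have hψ : ∀ w, c (((e.symm.trans φ).trans e) w) = c w := by
    intro w
    have := hφ (e.symm w)
    simpa using this
  have := hd ((e.symm.trans φ).trans e) hψ (e x)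
  simp only [RelIso.trans_apply] at this
  have h2 : e (φ x) = e x := by simpa using this
  exact e.toEquiv.injective h2


def colA {X : Type u} {Y : Type v} (f : X → Y) (y1 y2 : Y) :
    X ⊕ Y ⊕ Bool → ULift.{max u v} Y
  | Sum.inl x => ⟨f x⟩
  | Sum.inr (Sum.inl y) => ⟨y⟩
  | Sum.inr (Sum.inr true) => ⟨y1⟩
  | Sum.inr (Sum.inr false) => ⟨y2⟩

theorem caseA (X : Type u) (Y : Type v) [Nonempty X] (f : X ↪ Y)
    (y1 y2 : Y) (h12 : y1 ≠ y2) :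
    ∃ (C : Type (max u v)) (c : (X ⊕ Y ⊕ Bool) → C),
      VertexDistinguishing (DS X Y) c ∧
        ∀ a b : C, a ≠ b → b ∈ Set.range c →
          ¬ VertexDistinguishing (DS X Y) (mergeMap a b ∘ c) := by
  classical
  refine ⟨ULift.{max u v} Y, colA f y1 y2, ?_, ?_⟩
  · -- distinguishing
    intro φ hc
    obtain ⟨x0⟩ := ‹Nonempty X›
    have hxcyc : φ (xc X Y) = xc X Y ∨ φ (xc X Y) = yc X Y := by
      refine center_of_two (w1 := φ (yc X Y)) (w2 := φ (Sum.inl x0)) ?_ ?_ ?_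
      · intro he
        exact (by simp : (yc X Y : X ⊕ Y ⊕ Bool) ≠ Sum.inl x0) (φ.toEquiv.injective he)
      · exact φ.map_adj_iff.mpr ((adj_xc _).mpr (Or.inl rfl))
      · exact φ.map_adj_iff.mpr ((adj_xc _).mpr (Or.inr ⟨x0, rfl⟩))
    have hxc : φ (xc X Y) = xc X Y := by
      rcases hxcyc with h | h
      · exact h
      · exfalso
        have hcx := hc (xc X Y)
        rw [h] at hcx
        have : y2 = y1 := congrArg ULift.down hcx
        exact h12 this.symm
    have hycyc : φ (yc X Y) = xc X Y ∨ φ (yc X Y) = yc X Y := by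
      refine center_of_two (w1 := φ (xc X Y)) (w2 := φ (Sum.inr (Sum.inl y1))) ?_ ?_ ?_
      · intro he
        exact (by simp : (xc X Y : X ⊕ Y ⊕ Bool) ≠ Sum.inr (Sum.inl y1)) (φ.toEquiv.injective he)
      · exact φ.map_adj_iff.mpr ((adj_yc _).mpr (Or.inl rfl))
      · exact φ.map_adj_iff.mpr ((adj_yc _).mpr (Or.inr ⟨y1, rfl⟩))
    have hyc : φ (yc X Y) = yc X Y := by
      rcases hycyc with h | h
      · exfalso
        rw [← hxc] at h
        have : (yc X Y : X ⊕ Y ⊕ Bool) = xc X Y := φ.toEquiv.injective h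
        simp at this
      · exact h
    intro w
    rcases w with x | y | (_ | _)
    · have hadj : (DS X Y).Adj (xc X Y) (φ (Sum.inl x)) := by
        have h1 := φ.map_adj_iff.mpr ((adj_inl x (xc X Y)).mpr rfl)
        rw [hxc] at h1
        exact h1.symm
      rcases (adj_xc _).mp hadj with he | ⟨x2, he⟩
      · exfalso
        rw [← hyc] at he
        have := φ.toEquiv.injective he
        simp at this
      · have hcc := hc (Sum.inl x)
        rw [he] at hcc
        have hfx : f x2 = f x := congrArg ULift.down hcc
        rw [he, f.injective hfx]
    · have hadj : (DS X Y).Adj (yc X Y) (φ (Sum.inr (Sum.inl y))) := by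
        have h1 := φ.map_adj_iff.mpr ((adj_inry y (yc X Y)).mpr rfl)
        rw [hyc] at h1
        exact h1.symm
      rcases (adj_yc _).mp hadj with he | ⟨z2, he⟩
      · exfalso
        rw [← hxc] at he
        have := φ.toEquiv.injective he
        simp at this
      · have hcc := hc (Sum.inr (Sum.inl y))
        rw [he] at hcc
        have hz : z2 = y := congrArg ULift.down hcc
        rw [he, hz]
    · exact hyc
    · exact hxc
  · -- irreducibility
    intro a b hab _hbr h
    have hd : a.down ≠ b.down := fun he => hab (by cases a; cases b; cases he; rfl)
    have htwin : ∀ w, (DS X Y).Adj (Sum.inr (Sum.inl a.down)) w ↔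
        (DS X Y).Adj (Sum.inr (Sum.inl b.down)) w := by
      intro w
      rw [adj_inry, adj_inry]
    have hpres : ∀ w, (mergeMap a b ∘ colA f y1 y2)
        ((twinSwap (DS X Y) _ _ htwin) w) = (mergeMap a b ∘ colA f y1 y2) w := by
      intro w
      rw [twinSwap_apply]
      by_cases hvs : w = Sum.inr (Sum.inl a.down)
      · rw [hvs, Equiv.swap_apply_left]
        show mergeMap a b (colA f y1 y2 (Sum.inr (Sum.inl b.down)))
          = mergeMap a b (colA f y1 y2 (Sum.inr (Sum.inl a.down)))
        show mergeMap a b b = mergeMap a b a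
        simp [mergeMap, hab]
      · by_cases hvt : w = Sum.inr (Sum.inl b.down)
        · rw [hvt, Equiv.swap_apply_right]
          show mergeMap a b a = mergeMap a b b
          simp [mergeMap, hab]
        · rw [Equiv.swap_apply_of_ne_of_ne hvs hvt]
    have hfix := h (twinSwap (DS X Y) _ _ htwin) hpres (Sum.inr (Sum.inl a.down))
    rw [twinSwap_apply, Equiv.swap_apply_left] at hfix
    simp at hfix
    exact hab hfix.symm

def colB (X : Type u) (Y : Type v) : X ⊕ Y ⊕ Bool → ULift.{max u v} Bool
  | Sum.inl _ => ⟨false⟩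
  | Sum.inr (Sum.inl _) => ⟨false⟩
  | Sum.inr (Sum.inr true) => ⟨true⟩
  | Sum.inr (Sum.inr false) => ⟨false⟩

def swapMap (X : Type u) (Y : Type v) (x0 : X) (y0 : Y) : X ⊕ Y ⊕ Bool → X ⊕ Y ⊕ Bool
  | Sum.inl _ => Sum.inr (Sum.inl y0)
  | Sum.inr (Sum.inl _) => Sum.inl x0
  | Sum.inr (Sum.inr t) => Sum.inr (Sum.inr !t)

theorem caseB (X : Type u) (Y : Type v) [Nonempty X] [Nonempty Y]
    (hX : ∀ x1 x2 : X, x1 = x2) (hY : ∀ y1 y2 : Y, y1 = y2) :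
    ∃ (C : Type (max u v)) (c : (X ⊕ Y ⊕ Bool) → C),
      VertexDistinguishing (DS X Y) c ∧
        ∀ a b : C, a ≠ b → b ∈ Set.range c →
          ¬ VertexDistinguishing (DS X Y) (mergeMap a b ∘ c) := by
  classical
  obtain ⟨x0⟩ := ‹Nonempty X›
  obtain ⟨y0⟩ := ‹Nonempty Y›
  refine ⟨ULift.{max u v} Bool, colB X Y, ?_, ?_⟩
  · -- distinguishing
    intro φ hc
    have hxcyc : φ (xc X Y) = xc X Y ∨ φ (xc X Y) = yc X Y := by
      refine center_of_two (w1 := φ (yc X Y)) (w2 := φ (Sum.inl x0)) ?_ ?_ ?_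
      · intro he
        exact (by simp : (yc X Y : X ⊕ Y ⊕ Bool) ≠ Sum.inl x0) (φ.toEquiv.injective he)
      · exact φ.map_adj_iff.mpr ((adj_xc _).mpr (Or.inl rfl))
      · exact φ.map_adj_iff.mpr ((adj_xc _).mpr (Or.inr ⟨x0, rfl⟩))
    have hxc : φ (xc X Y) = xc X Y := by
      rcases hxcyc with h | h
      · exact h
      · exfalso
        have hcx := hc (xc X Y)
        rw [h] at hcx
        exact Bool.false_ne_true (congrArg ULift.down hcx)
    have hycyc : φ (yc X Y) = xc X Y ∨ φ (yc X Y) = yc X Y := by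
      refine center_of_two (w1 := φ (xc X Y)) (w2 := φ (Sum.inr (Sum.inl y0))) ?_ ?_ ?_
      · intro he
        exact (by simp : (xc X Y : X ⊕ Y ⊕ Bool) ≠ Sum.inr (Sum.inl y0)) (φ.toEquiv.injective he)
      · exact φ.map_adj_iff.mpr ((adj_yc _).mpr (Or.inl rfl))
      · exact φ.map_adj_iff.mpr ((adj_yc _).mpr (Or.inr ⟨y0, rfl⟩))
    have hyc : φ (yc X Y) = yc X Y := by
      rcases hycyc with h | h
      · exfalso
        rw [← hxc] at h
        have := φ.toEquiv.injective h
        simp at this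
      · exact h
    intro w
    rcases w with x | y | (_ | _)
    · have hadj : (DS X Y).Adj (xc X Y) (φ (Sum.inl x)) := by
        have h1 := φ.map_adj_iff.mpr ((adj_inl x (xc X Y)).mpr rfl)
        rw [hxc] at h1
        exact h1.symm
      rcases (adj_xc _).mp hadj with he | ⟨x2, he⟩
      · exfalso
        rw [← hyc] at he
        have := φ.toEquiv.injective he
        simp at this
      · rw [he, hX x2 x]
    · have hadj : (DS X Y).Adj (yc X Y) (φ (Sum.inr (Sum.inl y))) := by
        have h1 := φ.map_adj_iff.mpr ((adj_inry y (yc X Y)).mpr rfl)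
        rw [hyc] at h1
        exact h1.symm
      rcases (adj_yc _).mp hadj with he | ⟨z2, he⟩
      · exfalso
        rw [← hxc] at he
        have := φ.toEquiv.injective he
        simp at this
      · rw [he, hY z2 y]
    · exact hyc
    · exact hxc
  · -- irreducibility
    intro a b hab _hbr h
    have hinv : Function.Involutive (swapMap X Y x0 y0) := by
      intro w
      rcases w with x | y | (_ | _)
      · exact congrArg Sum.inl (hX x0 x)
      · exact congrArg (fun z => Sum.inr (Sum.inl z)) (hY y0 y)
      · rfl
      · rfl
    have hiso : ∀ u w, (DS X Y).Adj (swapMap X Y x0 y0 u) (swapMap X Y x0 y0 w) ↔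
        (DS X Y).Adj u w := by
      intro u w
      rcases u with x | y | (_ | _) <;> rcases w with x2 | y2 | (_ | _) <;>
        simp [swapMap, DS, SimpleGraph.fromRel_adj, DSRel]
    set ψ : DS X Y ≃g DS X Y := ⟨hinv.toPerm, hiso _ _⟩ with hψ
    have hconst : ∀ w : X ⊕ Y ⊕ Bool, (mergeMap a b ∘ colB X Y) w = a := by
      have hball : ∀ x : ULift.{max u v} Bool, x = a ∨ x = b := by
        intro x
        by_contra hcon
        push_neg at hcon
        obtain ⟨h1, h2⟩ := hcon
        rcases a with ⟨da⟩; rcases b with ⟨db⟩; rcases x with ⟨dx⟩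
        have h1' : dx ≠ da := fun he => h1 (by rw [he])
        have h2' : dx ≠ db := fun he => h2 (by rw [he])
        have hab' : da ≠ db := fun he => hab (by rw [he])
        cases da <;> cases db <;> cases dx <;> simp_all
      intro w
      rcases hball (colB X Y w) with hw | hw <;>
        simp only [Function.comp_apply, hw, mergeMap] <;> simp [hab]
    have hfix := h ψ (fun w => by rw [hconst, hconst]) (xc X Y)
    have : ψ (xc X Y) = yc X Y := rfl
    rw [this] at hfix
    simp at hfix

def dsSwapFun (X : Type u) (Y : Type v) : X ⊕ Y ⊕ Bool → Y ⊕ X ⊕ Bool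
  | Sum.inl x => Sum.inr (Sum.inl x)
  | Sum.inr (Sum.inl y) => Sum.inl y
  | Sum.inr (Sum.inr t) => Sum.inr (Sum.inr !t)

def dsSwap (X : Type u) (Y : Type v) : DS X Y ≃g DS Y X := by
  refine ⟨⟨dsSwapFun X Y, dsSwapFun Y X, ?_, ?_⟩, ?_⟩
  · intro w; rcases w with x | y | (_ | _) <;> rfl
  · intro w; rcases w with y | x | (_ | _) <;> rfl
  · intro u w
    rcases u with x | y | (_ | _) <;> rcases w with x2 | y2 | (_ | _) <;>
      simp [dsSwapFun, DS, SimpleGraph.fromRel_adj, DSRel]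

theorem mainLem (X : Type u) (Y : Type v) [Nonempty X] [Nonempty Y] (f : X ↪ Y) :
    ∃ (C : Type (max u v)) (c : (X ⊕ Y ⊕ Bool) → C),
      VertexDistinguishing (DS X Y) c ∧
        ∀ a b : C, a ≠ b → b ∈ Set.range c →
          ¬ VertexDistinguishing (DS X Y) (mergeMap a b ∘ c) := by
  by_cases hY : ∃ y1 y2 : Y, y1 ≠ y2
  · obtain ⟨y1, y2, h12⟩ := hY
    exact caseA X Y f y1 y2 h12
  · push_neg at hY
    exact caseB X Y (fun x1 x2 => f.injective (hY _ _)) hY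

/-- for all nonempty types `X` and `Y`, the double star `DS(X, Y)`
has an irreducible distinguishing vertex colouring. -/
theorem stmt4 (X : Type u) (Y : Type v) [Nonempty X] [Nonempty Y] :
    ∃ (C : Type (max u v)) (c : (X ⊕ Y ⊕ Bool) → C),
      VertexDistinguishing (DS X Y) c ∧
        ∀ a b : C, a ≠ b → b ∈ Set.range c →
          ¬ VertexDistinguishing (DS X Y) (mergeMap a b ∘ c) := by
  rcases Function.Embedding.total X Y with hf | hf
  · obtain ⟨f⟩ := hf
    exact mainLem X Y f
  · obtain ⟨f⟩ := hf
    obtain ⟨C, c, hd, hirr⟩ := mainLem Y X f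
    refine ⟨C, c ∘ (dsSwap X Y), dist_transport (dsSwap X Y) c hd, ?_⟩
    intro a b hab hbr hdist
    refine hirr a b hab ?_ ?_
    · obtain ⟨x, hx⟩ := hbr
      exact ⟨dsSwap X Y x, hx⟩
    · have h1 := dist_transport (dsSwap X Y).symm (mergeMap a b ∘ (c ∘ ⇑(dsSwap X Y))) hdist
      have hfun : (mergeMap a b ∘ (c ∘ ⇑(dsSwap X Y))) ∘ ⇑(dsSwap X Y).symm
          = mergeMap a b ∘ c := by
        funext w
        simp [RelIso.apply_symm_apply]
      rwa [hfun] at h1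
end

section
/- For all nonempty types X and Y, the double star DS(X,Y) has an irreducible distinguishing edge colouring, i.e., there exist a type C and a distinguishing edge colouring c : E(DS(X,Y)) → C such that no nontrivial merge of two colours of c is distinguishing. -/
universe u v w

/-- An edge colouring `c` is distinguishing if the identity is the only
automorphism of `G` preserving `c` (where an automorphism `φ` maps an edge
`{u, v}` to the edge `{φ u, φ v}`). -/
def EdgeDistinguishing {V : Type u} {C : Type w} (G : SimpleGraph V) (c : G.edgeSet → C) : Prop :=
  ∀ φ : G ≃g G, (∀ e : G.edgeSet, c (φ.mapEdgeSet e) = c e) → ∀ x : V, φ x = x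

namespace DSP

variable {X : Type u} {Y : Type v} {C : Type w}

abbrev xc (X : Type u) (Y : Type v) : X ⊕ Y ⊕ Bool := Sum.inr (Sum.inr true)
abbrev yc (X : Type u) (Y : Type v) : X ⊕ Y ⊕ Bool := Sum.inr (Sum.inr false)

lemma dsrel_elim {u1 v1 : X ⊕ Y ⊕ Bool} (h : DSRel X Y u1 v1) :
    (∃ x, u1 = Sum.inl x ∧ v1 = xc X Y) ∨ (∃ y, u1 = Sum.inr (Sum.inl y) ∧ v1 = yc X Y) ∨
      (u1 = xc X Y ∧ v1 = yc X Y) := by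
  rcases u1 with x | y | (_ | _) <;> rcases v1 with x' | y' | (_ | _) <;>
    first
      | exact Or.inl ⟨_, rfl, rfl⟩
      | exact Or.inr (Or.inl ⟨_, rfl, rfl⟩)
      | exact Or.inr (Or.inr ⟨rfl, rfl⟩)
      | cases h

lemma adj_elim {u1 v1 : X ⊕ Y ⊕ Bool} (h : (DS X Y).Adj u1 v1) :
    (∃ x, u1 = Sum.inl x ∧ v1 = xc X Y) ∨ (∃ y, u1 = Sum.inr (Sum.inl y) ∧ v1 = yc X Y) ∨
      (u1 = xc X Y ∧ v1 = yc X Y) ∨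
    (∃ x, v1 = Sum.inl x ∧ u1 = xc X Y) ∨ (∃ y, v1 = Sum.inr (Sum.inl y) ∧ u1 = yc X Y) ∨
      (v1 = xc X Y ∧ u1 = yc X Y) := by
  rw [DS, SimpleGraph.fromRel_adj] at h
  rcases h.2 with h' | h'
  · rcases dsrel_elim h' with h'' | h'' | h''
    · exact Or.inl h''
    · exact Or.inr (Or.inl h'')
    · exact Or.inr (Or.inr (Or.inl h''))
  · rcases dsrel_elim h' with h'' | h'' | h''
    · exact Or.inr (Or.inr (Or.inr (Or.inl h'')))
    · exact Or.inr (Or.inr (Or.inr (Or.inr (Or.inl h''))))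
    · exact Or.inr (Or.inr (Or.inr (Or.inr (Or.inr h''))))

lemma adjX (x : X) : (DS X Y).Adj (Sum.inl x) (xc X Y) := by
  rw [DS, SimpleGraph.fromRel_adj]
  exact ⟨by simp, Or.inl trivial⟩

lemma adjY (y : Y) : (DS X Y).Adj (Sum.inr (Sum.inl y)) (yc X Y) := by
  rw [DS, SimpleGraph.fromRel_adj]
  exact ⟨by simp, Or.inl trivial⟩

lemma adjC : (DS X Y).Adj (xc X Y) (yc X Y) := by
  rw [DS, SimpleGraph.fromRel_adj]
  exact ⟨by simp, Or.inl trivial⟩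

lemma adj_of_inl {x : X} {v1 : X ⊕ Y ⊕ Bool} (h : (DS X Y).Adj (Sum.inl x) v1) : v1 = xc X Y := by
  rcases adj_elim h with ⟨x', hx, hv⟩ | ⟨y, hy, _⟩ | ⟨h1, _⟩ | ⟨x', hv, hu⟩ | ⟨y, hv, hu⟩ | ⟨hv, hu⟩ <;>
    simp_all

lemma adj_of_inr {y : Y} {v1 : X ⊕ Y ⊕ Bool} (h : (DS X Y).Adj (Sum.inr (Sum.inl y)) v1) :
    v1 = yc X Y := by
  rcases adj_elim h with ⟨x', hx, hv⟩ | ⟨y', hy, _⟩ | ⟨h1, _⟩ | ⟨x', hv, hu⟩ | ⟨y', hv, hu⟩ | ⟨hv, hu⟩ <;>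
    simp_all

lemma adj_of_xc {v1 : X ⊕ Y ⊕ Bool} (h : (DS X Y).Adj v1 (xc X Y)) :
    v1 = yc X Y ∨ ∃ x, v1 = Sum.inl x := by
  rcases adj_elim h with ⟨x', hx, hv⟩ | ⟨y', hy, hv⟩ | ⟨h1, h2⟩ | ⟨x', hv, hu⟩ | ⟨y', hv, hu⟩ | ⟨hv, hu⟩ <;>
    simp_all

lemma adj_of_yc {v1 : X ⊕ Y ⊕ Bool} (h : (DS X Y).Adj v1 (yc X Y)) :
    v1 = xc X Y ∨ ∃ y, v1 = Sum.inr (Sum.inl y) := by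
  rcases adj_elim h with ⟨x', hx, hv⟩ | ⟨y', hy, hv⟩ | ⟨h1, h2⟩ | ⟨x', hv, hu⟩ | ⟨y', hv, hu⟩ | ⟨hv, hu⟩ <;>
    simp_all

lemma eq_ctr_of_two {u1 a b : X ⊕ Y ⊕ Bool} (ha : (DS X Y).Adj u1 a) (hb : (DS X Y).Adj u1 b)
    (hab : a ≠ b) : u1 = xc X Y ∨ u1 = yc X Y := by
  rcases u1 with x | y | (_ | _)
  · exact absurd ((adj_of_inl ha).trans (adj_of_inl hb).symm) hab
  · exact absurd ((adj_of_inr ha).trans (adj_of_inr hb).symm) hab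
  · exact Or.inr rfl
  · exact Or.inl rfl

lemma edge_elim (e : (DS X Y).edgeSet) :
    (∃ x, e.val = s(Sum.inl x, xc X Y)) ∨ (∃ y, e.val = s(Sum.inr (Sum.inl y), yc X Y)) ∨
      e.val = s(xc X Y, yc X Y) := by
  obtain ⟨E, hE⟩ := e
  revert hE
  induction E using Sym2.ind with
  | _ u1 v1 =>
    intro hE
    rw [SimpleGraph.mem_edgeSet] at hE
    rcases adj_elim hE with ⟨x, h1, h2⟩ | ⟨y, h1, h2⟩ | ⟨h1, h2⟩ | ⟨x, h1, h2⟩ | ⟨y, h1, h2⟩ | ⟨h1, h2⟩ <;>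
      subst h1 <;> subst h2
    · exact Or.inl ⟨x, rfl⟩
    · exact Or.inr (Or.inl ⟨y, rfl⟩)
    · exact Or.inr (Or.inr rfl)
    · exact Or.inl ⟨x, Sym2.eq_swap⟩
    · exact Or.inr (Or.inl ⟨y, Sym2.eq_swap⟩)
    · exact Or.inr (Or.inr Sym2.eq_swap)


def DD (f : X → C) (g : Y → C) (h₀ : C) : X ⊕ Y ⊕ Bool → C
  | Sum.inl x => f x
  | Sum.inr (Sum.inl y) => g y
  | Sum.inr (Sum.inr _) => h₀

def isCtr : X ⊕ Y ⊕ Bool → Bool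
  | Sum.inr (Sum.inr _) => true
  | _ => false

def FF (f : X → C) (g : Y → C) (h₀ : C) (u1 v1 : X ⊕ Y ⊕ Bool) : C :=
  cond (isCtr u1) (cond (isCtr v1) h₀ (DD f g h₀ v1)) (cond (isCtr v1) (DD f g h₀ u1) h₀)

lemma FF_symm (f : X → C) (g : Y → C) (h₀ : C) :
    ∀ u1 v1, FF f g h₀ u1 v1 = FF f g h₀ v1 u1 := by
  intro u1 v1
  unfold FF
  rcases hu : isCtr u1 <;> rcases hv : isCtr v1 <;> simp

def mkC (f : X → C) (g : Y → C) (h₀ : C) : (DS X Y).edgeSet → C :=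
  fun e => Sym2.lift ⟨FF f g h₀, FF_symm f g h₀⟩ e.val

@[simp] lemma lift_pair (f : X → C) (g : Y → C) (h₀ : C) (u1 v1 : X ⊕ Y ⊕ Bool) :
    Sym2.lift ⟨FF f g h₀, FF_symm f g h₀⟩ s(u1, v1) = FF f g h₀ u1 v1 :=
  Sym2.lift_mk _ _ _

@[simp] lemma FF_X (f : X → C) (g : Y → C) (h₀ : C) (x : X) :
    FF f g h₀ (Sum.inl x) (xc X Y) = f x := rfl
@[simp] lemma FF_Y (f : X → C) (g : Y → C) (h₀ : C) (y : Y) :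
    FF f g h₀ (Sum.inr (Sum.inl y)) (yc X Y) = g y := rfl
@[simp] lemma FF_C (f : X → C) (g : Y → C) (h₀ : C) :
    FF f g h₀ (xc X Y) (yc X Y) = h₀ := rfl
@[simp] lemma FF_C' (f : X → C) (g : Y → C) (h₀ : C) :
    FF f g h₀ (yc X Y) (xc X Y) = h₀ := rfl

lemma mkC_mapEdgeSet (f : X → C) (g : Y → C) (h₀ : C) (φ : DS X Y ≃g DS X Y)
    (e : (DS X Y).edgeSet) :
    mkC f g h₀ (φ.mapEdgeSet e) = Sym2.lift ⟨FF f g h₀, FF_symm f g h₀⟩ (Sym2.map ⇑φ e.val) := rfl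

lemma mkC_val (f : X → C) (g : Y → C) (h₀ : C) (E : Sym2 (X ⊕ Y ⊕ Bool)) (h : E ∈ (DS X Y).edgeSet) :
    mkC f g h₀ ⟨E, h⟩ = Sym2.lift ⟨FF f g h₀, FF_symm f g h₀⟩ E := rfl

def autoXY (ξ : X ≃ X) (η : Y ≃ Y) : DS X Y ≃g DS X Y where
  toEquiv := Equiv.sumCongr ξ (Equiv.sumCongr η (Equiv.refl Bool))
  map_rel_iff' := by
    rintro (x | y | (_ | _)) (x' | y' | (_ | _)) <;>
      simp [DS, SimpleGraph.fromRel_adj, DSRel]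

@[simp] lemma autoXY_inl (ξ : X ≃ X) (η : Y ≃ Y) (x : X) :
    (autoXY (Y := Y) ξ η) (Sum.inl x) = Sum.inl (ξ x) := rfl
@[simp] lemma autoXY_inr (ξ : X ≃ X) (η : Y ≃ Y) (y : Y) :
    (autoXY (X := X) ξ η) (Sum.inr (Sum.inl y)) = Sum.inr (Sum.inl (η y)) := rfl
@[simp] lemma autoXY_xc (ξ : X ≃ X) (η : Y ≃ Y) :
    (autoXY ξ η) (xc X Y) = xc X Y := rfl
@[simp] lemma autoXY_yc (ξ : X ≃ X) (η : Y ≃ Y) :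
    (autoXY ξ η) (yc X Y) = yc X Y := rfl

def swapEquiv (σ : X ≃ Y) : (X ⊕ Y ⊕ Bool) ≃ (X ⊕ Y ⊕ Bool) where
  toFun := fun u1 => match u1 with
    | Sum.inl x => Sum.inr (Sum.inl (σ x))
    | Sum.inr (Sum.inl y) => Sum.inl (σ.symm y)
    | Sum.inr (Sum.inr b) => Sum.inr (Sum.inr (!b))
  invFun := fun u1 => match u1 with
    | Sum.inl x => Sum.inr (Sum.inl (σ x))
    | Sum.inr (Sum.inl y) => Sum.inl (σ.symm y)
    | Sum.inr (Sum.inr b) => Sum.inr (Sum.inr (!b))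
  left_inv := by rintro (x | y | (_ | _)) <;> simp
  right_inv := by rintro (x | y | (_ | _)) <;> simp

def swapAuto (σ : X ≃ Y) : DS X Y ≃g DS X Y where
  toEquiv := swapEquiv σ
  map_rel_iff' := by
    rintro (x | y | (_ | _)) (x' | y' | (_ | _)) <;>
      simp [DS, SimpleGraph.fromRel_adj, DSRel, swapEquiv]

@[simp] lemma swapAuto_inl (σ : X ≃ Y) (x : X) :
    (swapAuto σ) (Sum.inl x) = Sum.inr (Sum.inl (σ x)) := rfl
@[simp] lemma swapAuto_inr (σ : X ≃ Y) (y : Y) :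
    (swapAuto σ) (Sum.inr (Sum.inl y)) = Sum.inl (σ.symm y) := rfl
@[simp] lemma swapAuto_xc (σ : X ≃ Y) : (swapAuto σ) (xc X Y) = yc X Y := rfl
@[simp] lemma swapAuto_yc (σ : X ≃ Y) : (swapAuto σ) (yc X Y) = xc X Y := rfl


variable {C' : Type*}

lemma pres_autoXY (k : C → C') (f : X → C) (g : Y → C) (h₀ : C) (ξ : X ≃ X) (η : Y ≃ Y)
    (hx : ∀ x, k (f (ξ x)) = k (f x)) (hy : ∀ y, k (g (η y)) = k (g y)) :
    ∀ e : (DS X Y).edgeSet, (k ∘ mkC f g h₀) ((autoXY ξ η).mapEdgeSet e) = (k ∘ mkC f g h₀) e := by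
  rintro ⟨E, hE⟩
  rcases edge_elim ⟨E, hE⟩ with ⟨x, hv⟩ | ⟨y, hv⟩ | hv <;>
  · simp only at hv
    subst hv
    simp only [Function.comp_apply, mkC_mapEdgeSet, mkC]
    simp [Sym2.map_pair_eq, hx, hy]

lemma pres_swapAuto (k : C → C') (f : X → C) (g : Y → C) (h₀ : C) (σ : X ≃ Y)
    (hx : ∀ x, k (g (σ x)) = k (f x)) (hy : ∀ y, k (f (σ.symm y)) = k (g y)) :
    ∀ e : (DS X Y).edgeSet, (k ∘ mkC f g h₀) ((swapAuto σ).mapEdgeSet e) = (k ∘ mkC f g h₀) e := by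
  rintro ⟨E, hE⟩
  rcases edge_elim ⟨E, hE⟩ with ⟨x, hv⟩ | ⟨y, hv⟩ | hv <;>
  · simp only at hv
    subst hv
    simp only [Function.comp_apply, mkC_mapEdgeSet, mkC]
    simp [Sym2.map_pair_eq, hx, hy]

lemma not_dist_of (c : (DS X Y).edgeSet → C') (φ : DS X Y ≃g DS X Y)
    (hp : ∀ e, c (φ.mapEdgeSet e) = c e) {v1 : X ⊕ Y ⊕ Bool} (hv : φ v1 ≠ v1) :
    ¬ EdgeDistinguishing (DS X Y) c := fun H => hv (H φ hp v1)

lemma main_dist [Nonempty X] [Nonempty Y] (f : X → C) (g : Y → C) (h₀ : C)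
    (hf : Function.Injective f) (hg : Function.Injective g)
    (h3 : ∀ τ : X ≃ Y, ∃ x, g (τ x) ≠ f x) :
    EdgeDistinguishing (DS X Y) (mkC f g h₀) := by
  intro φ hpres
  obtain ⟨x₀⟩ := ‹Nonempty X›
  obtain ⟨y₀⟩ := ‹Nonempty Y›
  -- φ maps xc to a centre
  have hxc : φ (xc X Y) = xc X Y ∨ φ (xc X Y) = yc X Y := by
    refine eq_ctr_of_two (a := φ (Sum.inl x₀)) (b := φ (yc X Y)) ?_ ?_ ?_
    · exact φ.map_rel_iff.mpr (adjX x₀).symm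
    · exact φ.map_rel_iff.mpr adjC
    · exact fun h => by simpa using φ.injective h
  have hyc : φ (yc X Y) = xc X Y ∨ φ (yc X Y) = yc X Y := by
    refine eq_ctr_of_two (a := φ (Sum.inr (Sum.inl y₀))) (b := φ (xc X Y)) ?_ ?_ ?_
    · exact φ.map_rel_iff.mpr (adjY y₀).symm
    · exact φ.map_rel_iff.mpr adjC.symm
    · exact fun h => by simpa using φ.injective h
  rcases hxc with hxc | hxc
  · -- identity case
    have hyc' : φ (yc X Y) = yc X Y := by
      rcases hyc with h | h
      · exact absurd (φ.injective (h.trans hxc.symm)) (by simp)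
      · exact h
    have hX : ∀ x : X, φ (Sum.inl x) = Sum.inl x := by
      intro x
      have hadj : (DS X Y).Adj (φ (Sum.inl x)) (xc X Y) := by
        rw [← hxc]; exact φ.map_rel_iff.mpr (adjX x)
      rcases adj_of_xc hadj with h | ⟨x₂, h⟩
      · exact absurd (φ.injective (h.trans hyc'.symm)) (by simp)
      · -- colour preservation forces x₂ = x
        have hc := hpres ⟨s(Sum.inl x, xc X Y), (SimpleGraph.mem_edgeSet _).mpr (adjX x)⟩
        rw [mkC_mapEdgeSet, mkC_val] at hc
        rw [Sym2.map_pair_eq, h, hxc] at hc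
        simp only [lift_pair, FF_X] at hc
        rw [h, hf hc]
    have hYl : ∀ y : Y, φ (Sum.inr (Sum.inl y)) = Sum.inr (Sum.inl y) := by
      intro y
      have hadj : (DS X Y).Adj (φ (Sum.inr (Sum.inl y))) (yc X Y) := by
        rw [← hyc']; exact φ.map_rel_iff.mpr (adjY y)
      rcases adj_of_yc hadj with h | ⟨y₂, h⟩
      · exact absurd (φ.injective (h.trans hxc.symm)) (by simp)
      · have hc := hpres ⟨s(Sum.inr (Sum.inl y), yc X Y), (SimpleGraph.mem_edgeSet _).mpr (adjY y)⟩
        rw [mkC_mapEdgeSet, mkC_val] at hc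
        rw [Sym2.map_pair_eq, h, hyc'] at hc
        simp only [lift_pair, FF_Y] at hc
        rw [h, hg hc]
    rintro (x | y | (_ | _))
    · exact hX x
    · exact hYl y
    · exact hyc'
    · exact hxc
  · -- swap case: derive a contradiction
    exfalso
    have hyc' : φ (yc X Y) = xc X Y := by
      rcases hyc with h | h
      · exact h
      · exact absurd (φ.injective (h.trans hxc.symm)) (by simp)
    have hX : ∀ x : X, ∃ y, φ (Sum.inl x) = Sum.inr (Sum.inl y) ∧ g y = f x := by
      intro x
      have hadj : (DS X Y).Adj (φ (Sum.inl x)) (yc X Y) := by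
        rw [← hxc]; exact φ.map_rel_iff.mpr (adjX x)
      rcases adj_of_yc hadj with h | ⟨y₂, h⟩
      · exact absurd (φ.injective (h.trans hyc'.symm)) (by simp)
      · refine ⟨y₂, h, ?_⟩
        have hc := hpres ⟨s(Sum.inl x, xc X Y), (SimpleGraph.mem_edgeSet _).mpr (adjX x)⟩
        rw [mkC_mapEdgeSet, mkC_val] at hc
        rw [Sym2.map_pair_eq, h, hxc] at hc
        simpa using hc
    choose σ' hσ' hσg using hX
    have hinj : Function.Injective σ' := by
      intro a b hab
      have : φ (Sum.inl a) = φ (Sum.inl b) := by rw [hσ' a, hσ' b, hab]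
      simpa using φ.injective this
    have hsurj : Function.Surjective σ' := by
      intro y
      have hadj : (DS X Y).Adj (φ.symm (Sum.inr (Sum.inl y))) (xc X Y) := by
        have h1 : (DS X Y).Adj (Sum.inr (Sum.inl y)) (yc X Y) := adjY y
        have h2 := φ.symm.map_rel_iff.mpr h1
        have h3' : φ.symm (yc X Y) = xc X Y := by
          apply φ.injective
          rw [hxc]
          exact (φ.apply_symm_apply _)
        rwa [h3'] at h2
      rcases adj_of_xc hadj with h | ⟨x, h⟩
      · exfalso
        have : Sum.inr (Sum.inl y) = φ (yc X Y) := by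
          rw [← h]; exact (φ.apply_symm_apply _).symm
        rw [hyc'] at this
        simp at this
      · refine ⟨x, ?_⟩
        have : φ (Sum.inl x) = Sum.inr (Sum.inl y) := by
          rw [← h]; exact φ.apply_symm_apply _
        have h2 := (hσ' x).symm.trans this
        simpa using h2
    obtain ⟨x, hx⟩ := h3 (Equiv.ofBijective σ' ⟨hinj, hsurj⟩)
    exact hx (hσg x)


lemma mergeMap_eq_of (a : C) {b z : C} (h : z = b) : mergeMap a b z = a := by
  simp [mergeMap, h]

lemma mergeMap_ne_of (a : C) {b z : C} (h : z ≠ b) : mergeMap a b z = z := by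
  simp [mergeMap, h]

lemma comp_swap_eq {α β : Type*} [DecidableEq α] (ν : α → β) (p q : α) (h : ν p = ν q) :
    ∀ x, ν (Equiv.swap p q x) = ν x := by
  intro x
  rcases eq_or_ne x p with rfl | h1
  · rw [Equiv.swap_apply_left]; exact h.symm
  rcases eq_or_ne x q with rfl | h2
  · rw [Equiv.swap_apply_right]; exact h
  · rw [Equiv.swap_apply_of_ne_of_ne h1 h2]

/-- Case A: a strict embedding `Y ↪ X`. -/
lemma caseA [Nonempty X] [Nonempty Y] (e : Y ↪ X) (x₀ : X) (hx₀ : ∀ y, e y ≠ x₀) :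
    ∃ (C : Type (max u v)) (c : (DS X Y).edgeSet → C),
      EdgeDistinguishing (DS X Y) c ∧
        ∀ a b : C, a ≠ b → b ∈ Set.range c →
          ¬ EdgeDistinguishing (DS X Y) (mergeMap a b ∘ c) := by
  classical
  refine ⟨ULift.{v} X, mkC (fun x => ⟨x⟩) (fun y => ⟨e y⟩) ⟨x₀⟩, ?_, ?_⟩
  · apply main_dist
    · intro x x' h; simpa using h
    · intro y y' h; exact e.injective (by simpa using h)
    · intro τ
      by_contra h
      push_neg at h
      exact hx₀ (τ x₀) (by simpa using h x₀)
  · rintro ⟨a'⟩ ⟨b'⟩ hab _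
    have hab' : a' ≠ b' := fun h => hab (by rw [h])
    refine not_dist_of _ (autoXY (Equiv.swap a' b') (Equiv.refl Y)) ?_ (v1 := Sum.inl a') ?_
    · apply pres_autoXY
      · refine comp_swap_eq (fun x => mergeMap ⟨a'⟩ ⟨b'⟩ (⟨x⟩ : ULift.{v} X)) a' b' ?_
        show mergeMap ⟨a'⟩ ⟨b'⟩ (⟨a'⟩ : ULift.{v} X) = mergeMap ⟨a'⟩ ⟨b'⟩ (⟨b'⟩ : ULift.{v} X)
        rw [mergeMap_ne_of _ (by simpa using hab'), mergeMap_eq_of _ rfl]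
      · intro y; rfl
    · show Sum.inl (Equiv.swap a' b' a') ≠ Sum.inl a'
      rw [Equiv.swap_apply_left]
      simp [hab'.symm]

/-- Case A': a strict embedding `X ↪ Y`. -/
lemma caseA' [Nonempty X] [Nonempty Y] (e : X ↪ Y) (y₀ : Y) (hy₀ : ∀ x, e x ≠ y₀) :
    ∃ (C : Type (max u v)) (c : (DS X Y).edgeSet → C),
      EdgeDistinguishing (DS X Y) c ∧
        ∀ a b : C, a ≠ b → b ∈ Set.range c →
          ¬ EdgeDistinguishing (DS X Y) (mergeMap a b ∘ c) := by
  classical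
  refine ⟨ULift.{u} Y, mkC (fun x => ⟨e x⟩) (fun y => ⟨y⟩) ⟨y₀⟩, ?_, ?_⟩
  · apply main_dist
    · intro x x' h; exact e.injective (by simpa using h)
    · intro y y' h; simpa using h
    · intro τ
      by_contra h
      push_neg at h
      exact hy₀ (τ.symm y₀) (by simpa using (h (τ.symm y₀)).symm)
  · rintro ⟨a'⟩ ⟨b'⟩ hab _
    have hab' : a' ≠ b' := fun h => hab (by rw [h])
    refine not_dist_of _ (autoXY (Equiv.refl X) (Equiv.swap a' b')) ?_ (v1 := Sum.inr (Sum.inl a')) ?_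
    · apply pres_autoXY
      · intro x; rfl
      · refine comp_swap_eq (fun y => mergeMap ⟨a'⟩ ⟨b'⟩ (⟨y⟩ : ULift.{u} Y)) a' b' ?_
        show mergeMap ⟨a'⟩ ⟨b'⟩ (⟨a'⟩ : ULift.{u} Y) = mergeMap ⟨a'⟩ ⟨b'⟩ (⟨b'⟩ : ULift.{u} Y)
        rw [mergeMap_ne_of _ (by simpa using hab'), mergeMap_eq_of _ rfl]
    · show Sum.inr (Sum.inl (Equiv.swap a' b' a')) ≠ Sum.inr (Sum.inl a')
      rw [Equiv.swap_apply_left]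
      simp [hab'.symm]


def fE : X → Option (ULift.{v} X) := fun x => some ⟨x⟩

noncomputable def gE (σ : X ≃ Y) (x₁ : X) : Y → Option (ULift.{v} X) := by
  classical exact fun y => if y = σ x₁ then none else some ⟨σ.symm y⟩

lemma gE_at (σ : X ≃ Y) (x₁ : X) : gE σ x₁ (σ x₁) = none := by simp [gE]

lemma gE_ne (σ : X ≃ Y) (x₁ : X) {y : Y} (h : y ≠ σ x₁) :
    gE σ x₁ y = some ⟨σ.symm y⟩ := by simp [gE, h]

lemma gE_app (σ : X ≃ Y) (x₁ : X) (x : X) (h : x ≠ x₁) : gE σ x₁ (σ x) = some ⟨x⟩ := by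
  rw [gE_ne σ x₁ (fun hh => h (σ.injective hh))]
  simp

/-- Case E: an equivalence `X ≃ Y`. -/
lemma caseE [Nonempty X] [Nonempty Y] (σ : X ≃ Y) :
    ∃ (C : Type (max u v)) (c : (DS X Y).edgeSet → C),
      EdgeDistinguishing (DS X Y) c ∧
        ∀ a b : C, a ≠ b → b ∈ Set.range c →
          ¬ EdgeDistinguishing (DS X Y) (mergeMap a b ∘ c) := by
  classical
  obtain ⟨x₁⟩ := ‹Nonempty X›
  refine ⟨Option (ULift.{v} X), mkC fE (gE σ x₁) (some ⟨x₁⟩), ?_, ?_⟩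
  · apply main_dist
    · intro x x' h; simpa [fE] using h
    · intro y y' h
      rcases eq_or_ne y (σ x₁) with rfl | h1 <;> rcases eq_or_ne y' (σ x₁) with rfl | h2
      · rfl
      · rw [gE_at, gE_ne σ x₁ h2] at h; exact absurd h (by simp)
      · rw [gE_at, gE_ne σ x₁ h1] at h; exact absurd h (by simp)
      · rw [gE_ne σ x₁ h1, gE_ne σ x₁ h2] at h
        have : σ.symm y = σ.symm y' := by simpa using h
        exact σ.symm.injective this
    · intro τ
      refine ⟨τ.symm (σ x₁), ?_⟩
      rw [Equiv.apply_symm_apply, gE_at]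
      simp [fE]
  · rintro a b hab _
    rcases b with _ | ⟨⟨b'⟩⟩
    · -- b = none
      rcases a with _ | ⟨⟨a'⟩⟩
      · exact absurd rfl hab
      · rcases eq_or_ne a' x₁ with rfl | ha
        · -- a = some ⟨x₁⟩, b = none : side swap
          refine not_dist_of _ (swapAuto σ) ?_ (v1 := xc X Y) ?_
          · apply pres_swapAuto
            · intro x
              rcases eq_or_ne x a' with rfl | hx'
              · simp [gE, fE, mergeMap]
              · simp [gE, fE, mergeMap, hx']
            · intro y
              rcases eq_or_ne y (σ a') with rfl | hy'
              · simp [gE, fE, mergeMap]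
              · simp [gE, fE, mergeMap, hy']
          · rw [swapAuto_xc]; simp
        · -- a = some ⟨a'⟩ with a' ≠ x₁, b = none : swap two Y-leaves
          refine not_dist_of _ (autoXY (Equiv.refl X) (Equiv.swap (σ x₁) (σ a')))
            ?_ (v1 := Sum.inr (Sum.inl (σ x₁))) ?_
          · apply pres_autoXY
            · intro x; rfl
            · refine comp_swap_eq (fun y => mergeMap (some ⟨a'⟩) none (gE σ x₁ y)) (σ x₁) (σ a') ?_
              simp [gE, mergeMap, ha, fun h => ha (σ.injective h)]
          · show Sum.inr (Sum.inl (Equiv.swap (σ x₁) (σ a') (σ x₁))) ≠ _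
            rw [Equiv.swap_apply_left]
            simp [ha]
    · -- b = some ⟨b'⟩
      rcases a with _ | ⟨⟨a'⟩⟩
      · rcases eq_or_ne b' x₁ with rfl | hb
        · -- a = none, b = some ⟨x₁⟩ : side swap
          refine not_dist_of _ (swapAuto σ) ?_ (v1 := xc X Y) ?_
          · apply pres_swapAuto
            · intro x
              rcases eq_or_ne x b' with rfl | hx'
              · simp [gE, fE, mergeMap]
              · simp [gE, fE, mergeMap, hx']
            · intro y
              rcases eq_or_ne y (σ b') with rfl | hy'
              · simp [gE, fE, mergeMap]
              · have hne : σ.symm y ≠ b' := fun h => hy' (by rw [← h, Equiv.apply_symm_apply])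
                simp [gE, fE, mergeMap, hy', hne]
          · rw [swapAuto_xc]; simp
        · -- a = none, b = some ⟨b'⟩ with b' ≠ x₁ : swap two Y-leaves
          refine not_dist_of _ (autoXY (Equiv.refl X) (Equiv.swap (σ x₁) (σ b')))
            ?_ (v1 := Sum.inr (Sum.inl (σ x₁))) ?_
          · apply pres_autoXY
            · intro x; rfl
            · refine comp_swap_eq (fun y => mergeMap none (some ⟨b'⟩) (gE σ x₁ y)) (σ x₁) (σ b') ?_
              simp [gE, mergeMap, hb, fun h => hb (σ.injective h)]
          · show Sum.inr (Sum.inl (Equiv.swap (σ x₁) (σ b') (σ x₁))) ≠ _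
            rw [Equiv.swap_apply_left]
            simp [hb]
      · -- a = some ⟨a'⟩, b = some ⟨b'⟩ : swap two X-leaves
        have hab' : a' ≠ b' := by
          intro h; exact hab (by rw [h])
        refine not_dist_of _ (autoXY (Equiv.swap a' b') (Equiv.refl Y))
          ?_ (v1 := Sum.inl a') ?_
        · apply pres_autoXY
          · refine comp_swap_eq (fun x => mergeMap (some ⟨a'⟩) (some ⟨b'⟩) (fE x)) a' b' ?_
            simp [fE, mergeMap, hab']
          · intro y; rfl
        · show Sum.inl (Equiv.swap a' b' a') ≠ Sum.inl a'
          rw [Equiv.swap_apply_left]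
          simp [hab'.symm]


end DSP

/-- for all nonempty types `X` and `Y`, the double star `DS(X, Y)`
has an irreducible distinguishing edge colouring. -/
theorem stmt5 (X : Type u) (Y : Type v) [Nonempty X] [Nonempty Y] :
    ∃ (C : Type (max u v)) (c : (DS X Y).edgeSet → C),
      EdgeDistinguishing (DS X Y) c ∧
        ∀ a b : C, a ≠ b → b ∈ Set.range c →
          ¬ EdgeDistinguishing (DS X Y) (mergeMap a b ∘ c) := by
  classical
  rcases Function.Embedding.total Y X with h | h <;> obtain ⟨e⟩ := h
  · by_cases hs : Function.Surjective (e : Y → X)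
    · exact DSP.caseE ((Equiv.ofBijective e ⟨e.injective, hs⟩).symm)
    · simp only [Function.Surjective, not_forall] at hs
      obtain ⟨x₀, hx₀⟩ := hs
      exact DSP.caseA e x₀ (fun y h => hx₀ ⟨y, h⟩)
  · by_cases hs : Function.Surjective (e : X → Y)
    · exact DSP.caseE (Equiv.ofBijective e ⟨e.injective, hs⟩)
    · simp only [Function.Surjective, not_forall] at hs
      obtain ⟨y₀, hy₀⟩ := hs
      exact DSP.caseA' e y₀ (fun x h => hy₀ ⟨x, h⟩)
end

section
/- For all nonempty types X and Y, the double star DS(X,Y) has an irreducible proper distinguishing edge colouring, i.e., there exist a type C and a proper distinguishing edge colouring c : E(DS(X,Y)) → C such that no nontrivial merge of two colours of c is a proper distinguishing edge colouring. -/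
universe u v w

/-- An edge colouring is proper if distinct edges sharing a common endpoint
receive distinct colours. -/
def ProperEdgeColoring {V : Type u} {C : Type w} (G : SimpleGraph V) (c : G.edgeSet → C) : Prop :=
  ∀ e f : G.edgeSet, e ≠ f → (∃ x : V, x ∈ (e : Sym2 V) ∧ x ∈ (f : Sym2 V)) → c e ≠ c f

/-!
Write `A` and `B` for the sets of colours on the edges at `x'` and at `y'` other than `x'y'`, and
`z` for the colour of `x'y'`. A proper colouring is distinguishing iff `A ≠ B`: a colour-preserving
automorphism fixes the edge `x'y'` (its colour is unique); if it fixes `x'`, properness forces it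
to fix every neighbour of a fixed vertex, and if it swaps `x'` and `y'` it carries `A` onto `B`;
conversely, if `A = B`, matching equal colours gives a bijection `X ≃ Y` and the automorphism
swapping the two sides preserves the colouring.

Suppose every colour is used. Merging `b` into `a` keeps the colouring proper only if `a` and `b`
never meet at a centre, i.e. one lies in `A \ B` and the other in `B \ A`. If each of these two
differences is then a single colour, the merge makes the two palettes equal, so it is not
distinguishing. Such colourings exist: take `A ⊊ B` when `X` embeds non-surjectively into `Y` (or
symmetrically), and when `X ≃ Y` let `A` be `B` with one colour exchanged for a fresh one.
-/

open Function Set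

def IsIrreducibleEdgeColoring {V : Type u} {C : Type w} (G : SimpleGraph V)
    (c : G.edgeSet → C) : Prop :=
  ProperEdgeColoring G c ∧ EdgeDistinguishing G c ∧
    ∀ a b : C, a ≠ b → b ∈ range c →
      ¬ (ProperEdgeColoring G (mergeMap a b ∘ c) ∧ EdgeDistinguishing G (mergeMap a b ∘ c))

def edgeColorsAt {V : Type u} {C : Type w} (G : SimpleGraph V) (c : G.edgeSet → C) (v : V) :
    Set C :=
  {k | ∃ e : G.edgeSet, v ∈ (e : Sym2 V) ∧ c e = k}

section mergeMap

variable {C : Type w} {a b : C}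

@[simp] lemma mergeMap_apply_left : mergeMap a b a = a := by simp [mergeMap]

@[simp] lemma mergeMap_apply_right : mergeMap a b b = a := by simp [mergeMap]

end mergeMap

lemma Set.image_subset_image_of_diff_subsingleton {α β : Type*} {A B : Set α} {g : α → β}
    {p q : α} (hAB : (A \ B).Subsingleton) (hp : p ∈ A \ B) (hq : q ∈ B) (hg : g p = g q) :
    g '' A ⊆ g '' B := by
  rintro _ ⟨t, ht, rfl⟩
  by_cases htB : t ∈ B
  · exact mem_image_of_mem g htB
  · rw [hAB ⟨ht, htB⟩ hp, hg]
    exact mem_image_of_mem g hq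

namespace ProperEdgeColoring

variable {V : Type u} {C : Type w} {G : SimpleGraph V} {c : G.edgeSet → C}

lemma eq_of_mem_of_mem (hc : ProperEdgeColoring G c) {e f : G.edgeSet} {v : V}
    (he : v ∈ (e : Sym2 V)) (hf : v ∈ (f : Sym2 V)) (h : c e = c f) : e = f :=
  by_contra fun hne => hc e f hne ⟨v, he, hf⟩ h

lemma apply_eq_of_adj (hc : ProperEdgeColoring G c) {φ : G ≃g G}
    (hφ : ∀ e, c (φ.mapEdgeSet e) = c e) {v w : V} (hv : φ v = v) (hvw : G.Adj v w) :
    φ w = w := by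
  let e : G.edgeSet := ⟨s(v, w), hvw⟩
  have hfix : φ.mapEdgeSet e = e :=
    hc.eq_of_mem_of_mem (v := v) (Sym2.mem_map.2 ⟨v, Sym2.mem_mk_left v w, hv⟩)
      (Sym2.mem_mk_left v w) (hφ e)
  have : s(φ v, φ w) = s(v, w) := congrArg Subtype.val hfix
  rwa [hv, Sym2.congr_right] at this

lemma notMem_edgeColorsAt_of_mergeMap {a b : C} (hc : ProperEdgeColoring G (mergeMap a b ∘ c))
    (hab : a ≠ b) {v : V} (ha : a ∈ edgeColorsAt G c v) : b ∉ edgeColorsAt G c v := by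
  rintro ⟨f, hf, rfl⟩
  obtain ⟨e, he, rfl⟩ := ha
  exact hc e f (fun h => hab (congrArg c h)) ⟨v, he, hf⟩ (by simp)

end ProperEdgeColoring

namespace DS

variable {X : Type u} {Y : Type v} {C : Type w}

abbrev centerX : X ⊕ Y ⊕ Bool := Sum.inr (Sum.inr true)

abbrev centerY : X ⊕ Y ⊕ Bool := Sum.inr (Sum.inr false)

lemma adj_iff {p q : X ⊕ Y ⊕ Bool} :
    (DS X Y).Adj p q ↔ p ≠ q ∧ (DSRel X Y p q ∨ DSRel X Y q p) :=
  SimpleGraph.fromRel_adj _ p q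

lemma adj_centerX (x : X) : (DS X Y).Adj centerX (Sum.inl x) := by simp [adj_iff, DSRel]

lemma adj_centerY (y : Y) : (DS X Y).Adj centerY (Sum.inr (Sum.inl y) : X ⊕ Y ⊕ Bool) := by
  simp [adj_iff, DSRel]

lemma adj_centerX_centerY : (DS X Y).Adj centerX centerY := by simp [adj_iff, DSRel]

def edgeX (x : X) : (DS X Y).edgeSet := ⟨s(centerX, Sum.inl x), adj_centerX x⟩

def edgeY (y : Y) : (DS X Y).edgeSet := ⟨s(centerY, Sum.inr (Sum.inl y)), adj_centerY y⟩

def centerEdge : (DS X Y).edgeSet := ⟨s(centerX, centerY), adj_centerX_centerY⟩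

lemma edge_cases (e : (DS X Y).edgeSet) :
    (∃ x, e = edgeX x) ∨ (∃ y, e = edgeY y) ∨ e = centerEdge := by
  obtain ⟨e, he⟩ := e
  induction e using Sym2.inductionOn with
  | hf p q =>
    simp only [edgeX, edgeY, centerEdge]
    rw [SimpleGraph.mem_edgeSet, adj_iff] at he
    rcases p with x | y | (_ | _) <;> rcases q with x' | y' | (_ | _) <;>
      simp_all [DSRel, Sym2.eq_swap]

@[simp] lemma edgeX_inj {x x' : X} : (edgeX x : (DS X Y).edgeSet) = edgeX x' ↔ x = x' := by
  simp [edgeX, Subtype.ext_iff]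

@[simp] lemma edgeY_inj {y y' : Y} : (edgeY y : (DS X Y).edgeSet) = edgeY y' ↔ y = y' := by
  simp [edgeY, Subtype.ext_iff]

@[simp] lemma edgeX_ne_edgeY (x : X) (y : Y) : (edgeX x : (DS X Y).edgeSet) ≠ edgeY y := by
  simp [edgeX, edgeY, Subtype.ext_iff]

@[simp] lemma edgeX_ne_centerEdge (x : X) : (edgeX x : (DS X Y).edgeSet) ≠ centerEdge := by
  simp [edgeX, centerEdge, Subtype.ext_iff]

@[simp] lemma edgeY_ne_centerEdge (y : Y) : (edgeY y : (DS X Y).edgeSet) ≠ centerEdge := by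
  simp [edgeY, centerEdge, Subtype.ext_iff]

lemma centerX_mem_iff {e : (DS X Y).edgeSet} :
    centerX ∈ (e : Sym2 (X ⊕ Y ⊕ Bool)) ↔ (∃ x, e = edgeX x) ∨ e = centerEdge := by
  rcases edge_cases e with ⟨x, rfl⟩ | ⟨y, rfl⟩ | rfl <;>
    simp [edgeX, edgeY, centerEdge, Subtype.ext_iff]

lemma centerY_mem_iff {e : (DS X Y).edgeSet} :
    centerY ∈ (e : Sym2 (X ⊕ Y ⊕ Bool)) ↔ (∃ y, e = edgeY y) ∨ e = centerEdge := by
  rcases edge_cases e with ⟨x, rfl⟩ | ⟨y, rfl⟩ | rfl <;>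
    simp [edgeX, edgeY, centerEdge, Subtype.ext_iff]

variable {c : (DS X Y).edgeSet → C}

theorem properEdgeColoring_iff :
    ProperEdgeColoring (DS X Y) c ↔
      Injective (c ∘ edgeX) ∧ Injective (c ∘ edgeY) ∧
        c centerEdge ∉ range (c ∘ edgeX) ∧ c centerEdge ∉ range (c ∘ edgeY) := by
  constructor
  · intro hc
    have hX (x : X) : centerX ∈ (edgeX (Y := Y) x).val := by simp [edgeX]
    have hY (y : Y) : centerY ∈ (edgeY (X := X) y).val := by simp [edgeY]
    refine ⟨fun x x' h => ?_, fun y y' h => ?_, ?_, ?_⟩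
    · exact edgeX_inj.1 (hc.eq_of_mem_of_mem (hX x) (hX x') h)
    · exact edgeY_inj.1 (hc.eq_of_mem_of_mem (hY y) (hY y') h)
    · rintro ⟨x, h⟩
      exact edgeX_ne_centerEdge x (hc.eq_of_mem_of_mem (hX x) (by simp [centerEdge]) h)
    · rintro ⟨y, h⟩
      exact edgeY_ne_centerEdge y (hc.eq_of_mem_of_mem (hY y) (by simp [centerEdge]) h)
  · rintro ⟨hX, hY, hzX, hzY⟩ e f hef ⟨p, hpe, hpf⟩ h
    rcases edge_cases e with ⟨x, rfl⟩ | ⟨y, rfl⟩ | rfl <;>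
      rcases edge_cases f with ⟨x', rfl⟩ | ⟨y', rfl⟩ | rfl
    · exact hef (congrArg edgeX (hX h))
    · simp only [edgeX, edgeY, Sym2.mem_iff] at hpe hpf
      rcases hpe with rfl | rfl <;> simp at hpf
    · exact hzX ⟨x, h⟩
    · simp only [edgeX, edgeY, Sym2.mem_iff] at hpe hpf
      rcases hpe with rfl | rfl <;> simp at hpf
    · exact hef (congrArg edgeY (hY h))
    · exact hzY ⟨y, h⟩
    · exact hzX ⟨x', h.symm⟩
    · exact hzY ⟨y', h.symm⟩
    · exact hef rfl

lemma eq_centerEdge_of_apply_eq (hc : ProperEdgeColoring (DS X Y) c) {e : (DS X Y).edgeSet}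
    (h : c e = c centerEdge) : e = centerEdge := by
  obtain ⟨-, -, hzX, hzY⟩ := properEdgeColoring_iff.1 hc
  rcases edge_cases e with ⟨x, rfl⟩ | ⟨y, rfl⟩ | rfl
  · exact absurd ⟨x, h⟩ hzX
  · exact absurd ⟨y, h⟩ hzY
  · rfl

section automorphisms

variable {φ : DS X Y ≃g DS X Y}

lemma apply_centerX_centerY (hc : ProperEdgeColoring (DS X Y) c)
    (hφ : ∀ e, c (φ.mapEdgeSet e) = c e) :
    (φ centerX = centerX ∧ φ centerY = centerY) ∨ (φ centerX = centerY ∧ φ centerY = centerX) := by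
  have h := congrArg Subtype.val (eq_centerEdge_of_apply_eq hc (hφ centerEdge))
  simpa [centerEdge, Sym2.eq_iff] using h

lemma range_edgeX_subset_of_map_centerX (hc : ProperEdgeColoring (DS X Y) c)
    (hφ : ∀ e, c (φ.mapEdgeSet e) = c e) (h : φ centerX = centerY) :
    range (c ∘ edgeX) ⊆ range (c ∘ edgeY) := by
  rintro _ ⟨x, rfl⟩
  have hmem : centerY ∈ (φ.mapEdgeSet (edgeX x)).val :=
    h ▸ Sym2.mem_map.2 ⟨centerX, Sym2.mem_mk_left _ _, rfl⟩
  rcases centerY_mem_iff.1 hmem with ⟨y, hy⟩ | hy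
  · exact ⟨y, by rw [comp_apply, ← hy, hφ, comp_apply]⟩
  · exact absurd (eq_centerEdge_of_apply_eq hc (by rw [← hφ, hy])) (edgeX_ne_centerEdge x)

lemma range_edgeY_subset_of_map_centerY (hc : ProperEdgeColoring (DS X Y) c)
    (hφ : ∀ e, c (φ.mapEdgeSet e) = c e) (h : φ centerY = centerX) :
    range (c ∘ edgeY) ⊆ range (c ∘ edgeX) := by
  rintro _ ⟨y, rfl⟩
  have hmem : centerX ∈ (φ.mapEdgeSet (edgeY y)).val :=
    h ▸ Sym2.mem_map.2 ⟨centerY, Sym2.mem_mk_left _ _, rfl⟩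
  rcases centerX_mem_iff.1 hmem with ⟨x, hx⟩ | hx
  · exact ⟨x, by rw [comp_apply, ← hx, hφ, comp_apply]⟩
  · exact absurd (eq_centerEdge_of_apply_eq hc (by rw [← hφ, hx])) (edgeY_ne_centerEdge y)

end automorphisms

lemma edgeDistinguishing_of_range_ne (hc : ProperEdgeColoring (DS X Y) c)
    (hne : range (c ∘ edgeX) ≠ range (c ∘ edgeY)) : EdgeDistinguishing (DS X Y) c := by
  intro φ hφ
  rcases apply_centerX_centerY hc hφ with ⟨hx, hy⟩ | ⟨hx, hy⟩
  · rintro (x | y | (_ | _))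
    · exact hc.apply_eq_of_adj hφ hx (adj_centerX x)
    · exact hc.apply_eq_of_adj hφ hy (adj_centerY y)
    · exact hy
    · exact hx
  · exact absurd (subset_antisymm (range_edgeX_subset_of_map_centerX hc hφ hx)
      (range_edgeY_subset_of_map_centerY hc hφ hy)) hne

def swapSides (σ : X ≃ Y) : X ⊕ Y ⊕ Bool → X ⊕ Y ⊕ Bool
  | Sum.inl x => Sum.inr (Sum.inl (σ x))
  | Sum.inr (Sum.inl y) => Sum.inl (σ.symm y)
  | Sum.inr (Sum.inr b) => Sum.inr (Sum.inr (!b))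

lemma swapSides_involutive (σ : X ≃ Y) : Involutive (swapSides σ) := by
  rintro (x | y | b) <;> simp [swapSides]

def swapIso (σ : X ≃ Y) : DS X Y ≃g DS X Y where
  toEquiv := (swapSides_involutive σ).toPerm _
  map_rel_iff' := by
    rintro (x | y | (_ | _)) (x' | y' | (_ | _)) <;> simp [adj_iff, DSRel, swapSides]

lemma swapIso_preserves {σ : X ≃ Y} (hσ : ∀ x, c (edgeY (σ x)) = c (edgeX x))
    (e : (DS X Y).edgeSet) : c ((swapIso σ).mapEdgeSet e) = c e := by
  rcases edge_cases e with ⟨x, rfl⟩ | ⟨y, rfl⟩ | rfl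
  · have hmap : (swapIso σ).mapEdgeSet (edgeX x) = edgeY (σ x) := by
      ext1; simp [swapIso, swapSides, edgeX, edgeY]
    rw [hmap, hσ]
  · have hmap : (swapIso σ).mapEdgeSet (edgeY y) = edgeX (σ.symm y) := by
      ext1; simp [swapIso, swapSides, edgeX, edgeY]
    rw [hmap, ← hσ, σ.apply_symm_apply]
  · have hmap : (swapIso σ).mapEdgeSet centerEdge = (centerEdge : (DS X Y).edgeSet) := by
      ext1; simp [swapIso, swapSides, centerEdge, Sym2.eq_swap]
    rw [hmap]

lemma not_edgeDistinguishing_of_range_eq (hc : ProperEdgeColoring (DS X Y) c)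
    (h : range (c ∘ edgeX) = range (c ∘ edgeY)) : ¬ EdgeDistinguishing (DS X Y) c := by
  obtain ⟨hX, hY, -, -⟩ := properEdgeColoring_iff.1 hc
  let σ : X ≃ Y :=
    (Equiv.ofInjective _ hX).trans ((Equiv.setCongr h).trans (Equiv.ofInjective _ hY).symm)
  have hσ (x : X) : c (edgeY (σ x)) = c (edgeX x) := by
    simpa [σ] using Equiv.apply_ofInjective_symm hY (Equiv.setCongr h ⟨c (edgeX x), x, rfl⟩)
  intro hd
  simpa [swapIso, swapSides] using hd (swapIso σ) (swapIso_preserves hσ) centerX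

theorem edgeDistinguishing_iff (hc : ProperEdgeColoring (DS X Y) c) :
    EdgeDistinguishing (DS X Y) c ↔ range (c ∘ edgeX) ≠ range (c ∘ edgeY) :=
  ⟨fun hd h => not_edgeDistinguishing_of_range_eq hc h hd, edgeDistinguishing_of_range_ne hc⟩

lemma range_subset_insert :
    range c ⊆ insert (c centerEdge) (range (c ∘ edgeX) ∪ range (c ∘ edgeY)) := by
  rintro _ ⟨e, rfl⟩
  rcases edge_cases e with ⟨x, rfl⟩ | ⟨y, rfl⟩ | rfl
  · exact Or.inr (Or.inl ⟨x, rfl⟩)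
  · exact Or.inr (Or.inr ⟨y, rfl⟩)
  · exact Or.inl rfl

lemma insert_subset_edgeColorsAt_centerX :
    insert (c centerEdge) (range (c ∘ edgeX)) ⊆ edgeColorsAt (DS X Y) c centerX := by
  rintro _ (rfl | ⟨x, rfl⟩)
  · exact ⟨centerEdge, Sym2.mem_mk_left _ _, rfl⟩
  · exact ⟨edgeX x, Sym2.mem_mk_left _ _, rfl⟩

lemma insert_subset_edgeColorsAt_centerY :
    insert (c centerEdge) (range (c ∘ edgeY)) ⊆ edgeColorsAt (DS X Y) c centerY := by
  rintro _ (rfl | ⟨y, rfl⟩)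
  · exact ⟨centerEdge, Sym2.mem_mk_right _ _, rfl⟩
  · exact ⟨edgeY y, Sym2.mem_mk_left _ _, rfl⟩

lemma mem_sdiff_of_properEdgeColoring_mergeMap {a b : C}
    (hc : ProperEdgeColoring (DS X Y) (mergeMap a b ∘ c)) (hab : a ≠ b) (ha : a ∈ range c)
    (hb : b ∈ range c) :
    (a ∈ range (c ∘ edgeX) \ range (c ∘ edgeY) ∧
        b ∈ range (c ∘ edgeY) \ range (c ∘ edgeX)) ∨
      (a ∈ range (c ∘ edgeY) \ range (c ∘ edgeX) ∧
        b ∈ range (c ∘ edgeX) \ range (c ∘ edgeY)) := by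
  have hX := fun ha hb => hc.notMem_edgeColorsAt_of_mergeMap hab
    (insert_subset_edgeColorsAt_centerX ha) (insert_subset_edgeColorsAt_centerX hb)
  have hY := fun ha hb => hc.notMem_edgeColorsAt_of_mergeMap hab
    (insert_subset_edgeColorsAt_centerY ha) (insert_subset_edgeColorsAt_centerY hb)
  have ha' := range_subset_insert ha
  have hb' := range_subset_insert hb
  simp only [mem_insert_iff, mem_union, mem_sdiff] at hX hY ha' hb' ⊢
  tauto

theorem isIrreducibleEdgeColoring_of_range (hc : ProperEdgeColoring (DS X Y) c)
    (hsurj : Surjective c) (hne : range (c ∘ edgeX) ≠ range (c ∘ edgeY))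
    (hdiff : (range (c ∘ edgeX) \ range (c ∘ edgeY)).Nonempty →
      (range (c ∘ edgeY) \ range (c ∘ edgeX)).Nonempty →
        (range (c ∘ edgeX) \ range (c ∘ edgeY)).Subsingleton ∧
          (range (c ∘ edgeY) \ range (c ∘ edgeX)).Subsingleton) :
    IsIrreducibleEdgeColoring (DS X Y) c := by
  refine ⟨hc, (edgeDistinguishing_iff hc).2 hne, fun a b hab _ ⟨hmc, hmd⟩ => ?_⟩
  refine (edgeDistinguishing_iff hmc).1 hmd ?_
  change range (mergeMap a b ∘ (c ∘ edgeX)) = range (mergeMap a b ∘ (c ∘ edgeY))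
  rw [range_comp (mergeMap a b), range_comp (mergeMap a b)]
  rcases mem_sdiff_of_properEdgeColoring_mergeMap hmc hab (hsurj a) (hsurj b) with
    ⟨ha, hb⟩ | ⟨ha, hb⟩
  · obtain ⟨hX, hY⟩ := hdiff ⟨a, ha⟩ ⟨b, hb⟩
    exact subset_antisymm (image_subset_image_of_diff_subsingleton hX ha hb.1 (by simp))
      (image_subset_image_of_diff_subsingleton hY hb ha.1 (by simp))
  · obtain ⟨hX, hY⟩ := hdiff ⟨b, hb⟩ ⟨a, ha⟩
    exact subset_antisymm (image_subset_image_of_diff_subsingleton hX hb ha.1 (by simp))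
      (image_subset_image_of_diff_subsingleton hY ha hb.1 (by simp))

lemma exists_coloring (cx : X → C) (cy : Y → C) (z : C) :
    ∃ c : (DS X Y).edgeSet → C, c ∘ edgeX = cx ∧ c ∘ edgeY = cy ∧ c centerEdge = z := by
  let edge : X ⊕ Y ⊕ Unit → (DS X Y).edgeSet :=
    Sum.elim edgeX (Sum.elim edgeY fun _ => centerEdge)
  have hX : Injective (edgeX : X → (DS X Y).edgeSet) := fun _ _ h => edgeX_inj.1 h
  have hY : Injective (edgeY : Y → (DS X Y).edgeSet) := fun _ _ h => edgeY_inj.1 h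
  have hedge : Injective edge :=
    hX.sumElim (hY.sumElim (injective_of_subsingleton _) fun y _ => edgeY_ne_centerEdge y)
      fun x => by rintro (y | _) <;> simp
  refine ⟨extend edge (Sum.elim cx (Sum.elim cy fun _ => z)) fun _ => z,
    funext fun x => hedge.extend_apply _ _ (Sum.inl x),
    funext fun y => hedge.extend_apply _ _ (Sum.inr (Sum.inl y)),
    hedge.extend_apply _ _ (Sum.inr (Sum.inr ()))⟩

theorem exists_isIrreducibleEdgeColoring {cx : X → C} {cy : Y → C} {z : C}
    (hcx : Injective cx) (hcy : Injective cy) (hzx : z ∉ range cx) (hzy : z ∉ range cy)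
    (hcover : ∀ k, k = z ∨ k ∈ range cx ∨ k ∈ range cy) (hne : range cx ≠ range cy)
    (hdiff : (range cx \ range cy).Nonempty → (range cy \ range cx).Nonempty →
      (range cx \ range cy).Subsingleton ∧ (range cy \ range cx).Subsingleton) :
    ∃ c : (DS X Y).edgeSet → C, IsIrreducibleEdgeColoring (DS X Y) c := by
  obtain ⟨c, rfl, rfl, rfl⟩ := exists_coloring cx cy z
  refine ⟨c, isIrreducibleEdgeColoring_of_range
    (properEdgeColoring_iff.2 ⟨hcx, hcy, hzx, hzy⟩) (fun k => ?_) hne hdiff⟩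
  rcases hcover k with rfl | ⟨x, rfl⟩ | ⟨y, rfl⟩
  exacts [⟨_, rfl⟩, ⟨_, rfl⟩, ⟨_, rfl⟩]

theorem exists_isIrreducibleEdgeColoring_of_embedding (i : X ↪ Y) (hi : ¬ Surjective i) :
    ∃ (C : Type (max u v)) (c : (DS X Y).edgeSet → C),
      IsIrreducibleEdgeColoring (DS X Y) c := by
  refine ⟨ULift.{u} (Option Y), exists_isIrreducibleEdgeColoring
    (cx := fun x => ⟨some (i x)⟩) (cy := fun y => ⟨some y⟩) (z := ⟨none⟩)
    (fun x x' h => by simpa using h) (fun y y' h => by simpa using h) (by simp) (by simp)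
    ?_ ?_ ?_⟩
  · rintro ⟨_ | y⟩
    exacts [Or.inl rfl, Or.inr (Or.inr ⟨y, rfl⟩)]
  · refine fun h => hi fun y => ?_
    obtain ⟨x, hx⟩ : (⟨some y⟩ : ULift.{u} (Option Y)) ∈ range fun x => ⟨some (i x)⟩ :=
      h ▸ mem_range_self y
    exact ⟨x, by simpa using hx⟩
  · rintro ⟨_, ⟨x, rfl⟩, hx⟩
    exact absurd ⟨i x, rfl⟩ hx

theorem exists_isIrreducibleEdgeColoring_of_embedding' (j : Y ↪ X) (hj : ¬ Surjective j) :
    ∃ (C : Type (max u v)) (c : (DS X Y).edgeSet → C),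
      IsIrreducibleEdgeColoring (DS X Y) c := by
  refine ⟨ULift.{v} (Option X), exists_isIrreducibleEdgeColoring
    (cx := fun x => ⟨some x⟩) (cy := fun y => ⟨some (j y)⟩) (z := ⟨none⟩)
    (fun x x' h => by simpa using h) (fun y y' h => by simpa using h) (by simp) (by simp)
    ?_ ?_ ?_⟩
  · rintro ⟨_ | x⟩
    exacts [Or.inl rfl, Or.inr (Or.inl ⟨x, rfl⟩)]
  · refine fun h => hj fun x => ?_
    obtain ⟨y, hy⟩ : (⟨some x⟩ : ULift.{v} (Option X)) ∈ range fun y => ⟨some (j y)⟩ :=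
      h ▸ mem_range_self x
    exact ⟨y, by simpa using hy⟩
  · rintro - ⟨_, ⟨y, rfl⟩, hy⟩
    exact absurd ⟨j y, rfl⟩ hy

theorem exists_isIrreducibleEdgeColoring_of_equiv (σ : X ≃ Y) (x₀ : X) :
    ∃ (C : Type (max u v)) (c : (DS X Y).edgeSet → C),
      IsIrreducibleEdgeColoring (DS X Y) c := by
  classical
  let cy : Y → ULift.{u} (Option (Option Y)) := fun y => ⟨some (some y)⟩
  let cx := update (cy ∘ σ) x₀ ⟨some none⟩
  have hcx_of_ne {x : X} (hx : x ≠ x₀) : cx x = cy (σ x) := update_of_ne hx _ _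
  have hdiffX : range cx \ range cy ⊆ {⟨some none⟩} := by
    rintro _ ⟨⟨x, rfl⟩, hx⟩
    by_cases h : x = x₀
    · simp [cx, h]
    · exact absurd ⟨σ x, (hcx_of_ne h).symm⟩ hx
  have hdiffY : range cy \ range cx ⊆ {cy (σ x₀)} := by
    rintro _ ⟨⟨y, rfl⟩, hy⟩
    by_contra h
    have hy₀ : σ.symm y ≠ x₀ := fun h' => h (by rw [← h', σ.apply_symm_apply]; rfl)
    exact hy ⟨σ.symm y, by rw [hcx_of_ne hy₀, σ.apply_symm_apply]⟩
  refine ⟨_, exists_isIrreducibleEdgeColoring (cx := cx) (cy := cy) (z := ⟨none⟩)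
    ?_ (fun y y' h => by simpa [cy] using h) ?_ (by simp [cy]) ?_ ?_
    fun _ _ => ⟨subsingleton_singleton.anti hdiffX, subsingleton_singleton.anti hdiffY⟩⟩
  · intro x x' h
    simp only [cx, cy, update_apply, comp_apply] at h
    split_ifs at h with hx hx'
    · exact hx.trans hx'.symm
    all_goals simp_all
  · rintro ⟨x, hx⟩
    simp only [cx, cy, update_apply, comp_apply] at hx
    split_ifs at hx <;> simp at hx
  · rintro ⟨_ | _ | y⟩
    exacts [Or.inl rfl, Or.inr (Or.inl ⟨x₀, by simp [cx]⟩), Or.inr (Or.inr ⟨y, rfl⟩)]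
  · intro h
    obtain ⟨y, hy⟩ : cx x₀ ∈ range cy := h ▸ mem_range_self x₀
    simp [cx, cy] at hy

end DS

theorem stmt7_general (X : Type u) (Y : Type v) [Nonempty X] :
    ∃ (C : Type (max u v)) (c : (DS X Y).edgeSet → C),
      ProperEdgeColoring (DS X Y) c ∧ EdgeDistinguishing (DS X Y) c ∧
        ∀ a b : C, a ≠ b → b ∈ Set.range c →
          ¬ (ProperEdgeColoring (DS X Y) (mergeMap a b ∘ c) ∧
              EdgeDistinguishing (DS X Y) (mergeMap a b ∘ c)) := by
  rcases Embedding.total X Y with ⟨⟨i⟩⟩ | ⟨⟨j⟩⟩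
  · by_cases hi : Surjective i
    · exact DS.exists_isIrreducibleEdgeColoring_of_equiv
        (Equiv.ofBijective i ⟨i.injective, hi⟩) (Classical.arbitrary X)
    · exact DS.exists_isIrreducibleEdgeColoring_of_embedding i hi
  · by_cases hj : Surjective j
    · exact DS.exists_isIrreducibleEdgeColoring_of_equiv
        (Equiv.ofBijective j ⟨j.injective, hj⟩).symm (Classical.arbitrary X)
    · exact DS.exists_isIrreducibleEdgeColoring_of_embedding' j hj

/-- for all nonempty types `X` and `Y`, the double star `DS(X, Y)`
has an irreducible proper distinguishing edge colouring. -/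
theorem stmt7 (X : Type u) (Y : Type v) [Nonempty X] [Nonempty Y] :
    ∃ (C : Type (max u v)) (c : (DS X Y).edgeSet → C),
      ProperEdgeColoring (DS X Y) c ∧ EdgeDistinguishing (DS X Y) c ∧
        ∀ a b : C, a ≠ b → b ∈ Set.range c →
          ¬ (ProperEdgeColoring (DS X Y) (mergeMap a b ∘ c) ∧
              EdgeDistinguishing (DS X Y) (mergeMap a b ∘ c)) :=
  stmt7_general X Y
end
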